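/- Polynomial Poincaré lemma for the curl: if v ∈ 𝐏_r is a vector field on ℝ³ with polynomial components of total degree at most r and ∇·v = 0 everywhere on ℝ³, then there exists a vector field q ∈ 𝐏_{r+1} with polynomial components of total degree at most r+1 such that v = ∇×q. -/

import Mathlib

open MeasureTheory

/-- Divergence of a vector field on ℝ³. -/
noncomputable def pdiv (v : (Fin 3 → ℝ) → (Fin 3 → ℝ)) (x : Fin 3 → ℝ) : ℝ :=
  ∑ i : Fin 3, fderiv ℝ (fun y => v y i) x (Pi.single i 1)

/-- Curl of a vector field on ℝ³. -/
noncomputable def pcurl (v : (Fin 3 → ℝ) → (Fin 3 → ℝ)) (x : Fin 3 → ℝ) : Fin 3 → ℝ :=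
  ![fderiv ℝ (fun y => v y 2) x (Pi.single 1 1) - fderiv ℝ (fun y => v y 1) x (Pi.single 2 1),
    fderiv ℝ (fun y => v y 0) x (Pi.single 2 1) - fderiv ℝ (fun y => v y 2) x (Pi.single 0 1),
    fderiv ℝ (fun y => v y 1) x (Pi.single 0 1) - fderiv ℝ (fun y => v y 0) x (Pi.single 1 1)]

/-- Gradient of a scalar field on ℝ³. -/
noncomputable def pgrad (p : (Fin 3 → ℝ) → ℝ) (x : Fin 3 → ℝ) : Fin 3 → ℝ :=
  fun i => fderiv ℝ p x (Pi.single i 1)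

/-- The Poincaré-type operator 𝔭: (𝔭u)(x) = (∫₀¹ t² u(tx) dt) x. -/
noncomputable def poin (u : (Fin 3 → ℝ) → ℝ) (x : Fin 3 → ℝ) : Fin 3 → ℝ :=
  (∫ t in (0:ℝ)..1, t ^ 2 * u (t • x)) • x

/-- `u` is a polynomial function of total degree at most `r` (P_r = {0} if r < 0). -/
def IsPolyDeg (r : ℤ) (u : (Fin 3 → ℝ) → ℝ) : Prop :=
  ∃ p : MvPolynomial (Fin 3) ℝ, (p = 0 ∨ (p.totalDegree : ℤ) ≤ r) ∧
    ∀ x, MvPolynomial.eval x p = u x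

/-- `v` is a vector field with polynomial components of total degree at most `r`. -/
def IsVecPolyDeg (r : ℤ) (v : (Fin 3 → ℝ) → (Fin 3 → ℝ)) : Prop :=
  ∀ i, IsPolyDeg r fun x => v x i

/-- `u` is a polynomial function. -/
def IsPolyFun (u : (Fin 3 → ℝ) → ℝ) : Prop :=
  ∃ p : MvPolynomial (Fin 3) ℝ, ∀ x, MvPolynomial.eval x p = u x

/-- Membership in S_k = {p ∈ (P̃_k)³ : x·p(x) = 0}. -/
def MemS (k : ℕ) (v : (Fin 3 → ℝ) → (Fin 3 → ℝ)) : Prop :=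
  (∀ i, ∃ p : MvPolynomial (Fin 3) ℝ, p.IsHomogeneous k ∧ ∀ x, MvPolynomial.eval x p = v x i) ∧
    ∀ x, ∑ i : Fin 3, x i * v x i = 0

/-- Membership in the first-family Nédélec space R_k = 𝐏_{k-1} ⊕ S_k. -/
def MemR (k : ℕ) (v : (Fin 3 → ℝ) → (Fin 3 → ℝ)) : Prop :=
  ∃ v₁ v₂, IsVecPolyDeg ((k : ℤ) - 1) v₁ ∧ MemS k v₂ ∧ v = v₁ + v₂

/-!
If `w` is homogeneous of degree `d` and divergence-free, Euler's identity `(x · ∇) w = d w` gives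
`∇ × (w × x) = (d + 2) w - x (∇ · w) = (d + 2) w`. Every homogeneous component of a divergence-free
field is again divergence-free, so `q = ∑_{d ≤ r} (w_d × x) / (d + 2)` is a potential for
`v = ∑_{d ≤ r} w_d`, and its components are homogeneous of degree `d + 1 ≤ r + 1`.
-/

open MvPolynomial Matrix

namespace MvPolynomial

section Calculus

variable {𝕜 σ : Type*} [NontriviallyNormedField 𝕜] [Fintype σ]

theorem hasFDerivAt_eval (p : MvPolynomial σ 𝕜) (x : σ → 𝕜) :
    HasFDerivAt (fun y => eval y p)
      (∑ i, eval x (pderiv i p) • (ContinuousLinearMap.proj i : (σ → 𝕜) →L[𝕜] 𝕜)) x := by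
  classical
  induction p using MvPolynomial.induction_on with
  | C a =>
    simp only [eval_C]
    exact (hasFDerivAt_const a x).congr_fderiv (by ext; simp)
  | add p q hp hq =>
    simp only [eval_add]
    exact (hp.add hq).congr_fderiv (by ext; simp [add_mul, Finset.sum_add_distrib])
  | mul_X p j hp =>
    simp only [eval_mul, eval_X]
    refine (hp.mul (ContinuousLinearMap.proj j).hasFDerivAt).congr_fderiv ?_
    ext y
    simp [Pi.single_apply, apply_ite (eval x), ite_mul, add_mul, Finset.sum_add_distrib,
      Finset.mul_sum, mul_assoc]

theorem fderiv_eval_single [DecidableEq σ] (p : MvPolynomial σ 𝕜) (x : σ → 𝕜) (i : σ) :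
    fderiv 𝕜 (fun y => eval y p) x (Pi.single i 1) = eval x (pderiv i p) := by
  simp [(hasFDerivAt_eval p x).fderiv, Pi.single_apply]

end Calculus

section CommSemiring

variable {σ R : Type*} [CommSemiring R]

theorem homogeneousComponent_pderiv (n : ℕ) (i : σ) (p : MvPolynomial σ R) :
    homogeneousComponent n (pderiv i p) = pderiv i (homogeneousComponent (n + 1) p) := by
  induction p using MvPolynomial.induction_on' with
  | add p q hp hq => simp [hp, hq]
  | monomial m a =>
    have hm := isHomogeneous_monomial a (rfl : m.degree = m.degree)
    rw [homogeneousComponent_of_mem hm, homogeneousComponent_of_mem hm.pderiv]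
    split_ifs with h₁ h₂ h₂
    · rfl
    · have hm0 : m = 0 := by rw [← Finsupp.degree_eq_zero_iff]; omega
      simp [hm0]
    · omega
    · simp

theorem sum_range_homogeneousComponent {p : MvPolynomial σ R} {r : ℕ}
    (hp : p.totalDegree ≤ r) : ∑ d ∈ Finset.range (r + 1), homogeneousComponent d p = p := by
  rw [← Finset.sum_subset (Finset.range_subset_range.mpr (by omega : p.totalDegree + 1 ≤ r + 1)),
    sum_homogeneousComponent]
  intro d _ hd
  exact homogeneousComponent_eq_zero d p (by simpa using hd)

variable [Fintype σ]

noncomputable def divergence (w : σ → MvPolynomial σ R) : MvPolynomial σ R :=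
  ∑ i, pderiv i (w i)

theorem divergence_homogeneousComponent_succ (w : σ → MvPolynomial σ R) (n : ℕ) :
    divergence (fun i => homogeneousComponent (n + 1) (w i)) =
      homogeneousComponent n (divergence w) := by
  simp [divergence, homogeneousComponent_pderiv]

theorem divergence_homogeneousComponent_eq_zero {w : σ → MvPolynomial σ R}
    (hw : divergence w = 0) (d : ℕ) :
    divergence (fun i => homogeneousComponent d (w i)) = 0 := by
  cases d with
  | zero => simp [divergence]
  | succ n => rw [divergence_homogeneousComponent_succ, hw, map_zero]

end CommSemiring

section CommRing

variable {R : Type*} [CommRing R]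

noncomputable def curl :
    (Fin 3 → MvPolynomial (Fin 3) R) →ₗ[R] Fin 3 → MvPolynomial (Fin 3) R where
  toFun w := ![pderiv 1 (w 2) - pderiv 2 (w 1), pderiv 2 (w 0) - pderiv 0 (w 2),
    pderiv 0 (w 1) - pderiv 1 (w 0)]
  map_add' v w := by ext i; fin_cases i <;> simp <;> abel
  map_smul' c w := by ext i; fin_cases i <;> simp [smul_sub]

theorem curl_cross_X {w : Fin 3 → MvPolynomial (Fin 3) R} {d : ℕ}
    (hw : ∀ i, (w i).IsHomogeneous d) :
    curl (w ⨯₃ fun i => X i) = ((d : R) + 2) • w - divergence w • fun i => X i := by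
  have euler : ∀ j, ∑ i, X i * pderiv i (w j) = C (d : R) * w j := fun j => by
    rw [(hw j).sum_X_mul_pderiv, nsmul_eq_mul, ← map_natCast C]
  funext i
  fin_cases i <;>
  · simp [curl, cross_apply, divergence, Fin.sum_univ_three, smul_eq_C_mul, map_ofNat] at euler ⊢
    linear_combination euler _

theorem isHomogeneous_cross_X {w : Fin 3 → MvPolynomial (Fin 3) R} {d : ℕ}
    (hw : ∀ i, (w i).IsHomogeneous d) (i : Fin 3) :
    ((w ⨯₃ fun j => X j) i).IsHomogeneous (d + 1) := by
  fin_cases i <;>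
  · simp only [cross_apply]
    exact ((hw _).mul (isHomogeneous_X R _)).sub ((hw _).mul (isHomogeneous_X R _))

end CommRing

theorem exists_curl_eq_of_divergence_eq_zero {K : Type*} [Field K] [CharZero K]
    {p : Fin 3 → MvPolynomial (Fin 3) K} {r : ℕ} (hp : ∀ i, (p i).totalDegree ≤ r)
    (hdiv : divergence p = 0) :
    ∃ q : Fin 3 → MvPolynomial (Fin 3) K, (∀ i, (q i).totalDegree ≤ r + 1) ∧ curl q = p := by
  set w : ℕ → Fin 3 → MvPolynomial (Fin 3) K := fun d i => homogeneousComponent d (p i)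
  have hw : ∀ d i, (w d i).IsHomogeneous d := fun d i => homogeneousComponent_isHomogeneous d (p i)
  refine ⟨∑ d ∈ Finset.range (r + 1), ((d : K) + 2)⁻¹ • (w d ⨯₃ fun i => X i), fun i => ?_, ?_⟩
  · rw [Finset.sum_apply]
    refine (totalDegree_finsetSum _ _).trans (Finset.sup_le fun d hd => ?_)
    refine (totalDegree_smul_le _ _).trans ((isHomogeneous_cross_X (hw d) i).totalDegree_le.trans ?_)
    simpa using Finset.mem_range.mp hd
  · have hdivw : ∀ d, divergence (w d) = 0 := divergence_homogeneousComponent_eq_zero hdiv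
    have hd2 : ∀ d : ℕ, (d : K) + 2 ≠ 0 := fun d => by exact_mod_cast (d + 1).succ_ne_zero
    simp_rw [map_sum, map_smul, curl_cross_X (hw _), hdivw, zero_smul, sub_zero, smul_smul,
      inv_mul_cancel₀ (hd2 _), one_smul]
    funext i
    rw [Finset.sum_apply]
    exact sum_range_homogeneousComponent (hp i)

end MvPolynomial

theorem pdiv_eval (w : Fin 3 → MvPolynomial (Fin 3) ℝ) (x : Fin 3 → ℝ) :
    pdiv (fun y i => eval y (w i)) x = eval x (divergence w) := by
  simp [pdiv, divergence, fderiv_eval_single]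

theorem pcurl_eval (q : Fin 3 → MvPolynomial (Fin 3) ℝ) (x : Fin 3 → ℝ) :
    pcurl (fun y i => eval y (q i)) x = fun i => eval x (curl q i) := by
  funext i
  fin_cases i <;> simp [pcurl, curl, fderiv_eval_single]

theorem IsVecPolyDeg.exists_eq_eval {r : ℕ} {v : (Fin 3 → ℝ) → Fin 3 → ℝ}
    (hv : IsVecPolyDeg r v) :
    ∃ p : Fin 3 → MvPolynomial (Fin 3) ℝ, (∀ i, (p i).totalDegree ≤ r) ∧
      v = fun x i => eval x (p i) := by
  choose p hp using hv
  refine ⟨p, fun i => ?_, funext fun x => funext fun i => ((hp i).2 x).symm⟩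
  rcases (hp i).1 with h | h
  · simp [h]
  · exact_mod_cast h

theorem isVecPolyDeg_eval {r : ℕ} {q : Fin 3 → MvPolynomial (Fin 3) ℝ}
    (hq : ∀ i, (q i).totalDegree ≤ r) : IsVecPolyDeg r fun x i => eval x (q i) :=
  fun i => ⟨q i, Or.inr (by exact_mod_cast hq i), fun _ => rfl⟩

/-- polynomial Poincaré lemma for the curl. -/
theorem stmt_7 (r : ℕ) (v : (Fin 3 → ℝ) → (Fin 3 → ℝ)) (hv : IsVecPolyDeg (r : ℤ) v)
    (hdiv : ∀ x, pdiv v x = 0) :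
    ∃ q : (Fin 3 → ℝ) → (Fin 3 → ℝ), IsVecPolyDeg ((r : ℤ) + 1) q ∧ ∀ x, v x = pcurl q x := by
  obtain ⟨p, hp, rfl⟩ := hv.exists_eq_eval
  have hdivp : divergence p = 0 :=
    MvPolynomial.funext fun x => by simpa [pdiv_eval] using hdiv x
  obtain ⟨q, hq, hcurl⟩ := exists_curl_eq_of_divergence_eq_zero hp hdivp
  refine ⟨fun x i => eval x (q i), by exact_mod_cast isVecPolyDeg_eval hq, fun x => ?_⟩
  rw [pcurl_eval, hcurl]
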